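/- arXiv:2304.13990 — 3 statements merged into one kernel-verified Lean document; each statement's English description precedes it below -/
import Mathlib

section
/- If λ is a linear character of G and j satisfies [λ, 1_{G_j}] ≠ 0, then for all σ ∈ G, f^λ_{iσ(j)} = λ(σ^{-1}) f^λ_{ij}; hence the cyclic subspace V^λ_{ij} = span{f^λ_{iσ(j)} : σ ∈ G} is one-dimensional. -/
open scoped Classical InnerProductSpace ComplexConjugate

noncomputable section

/-- The Cartesian product `×^m V` with the inner product `⟨z,w⟩ = Σ ⟨z_i, w_i⟩`. -/
abbrev CartPow (V : Type*) [NormedAddCommGroup V] [InnerProductSpace ℂ V] (m : ℕ) :=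
  PiLp 2 (fun _ : Fin m => V)

/-- The Cartesian permutation operator `Q(τ)(u₁,…,u_m) = (u_{τ⁻¹(1)},…,u_{τ⁻¹(m)})`. -/
def CartQ (V : Type*) [NormedAddCommGroup V] [InnerProductSpace ℂ V] (m : ℕ)
    (τ : Equiv.Perm (Fin m)) : CartPow V m →ₗ[ℂ] CartPow V m where
  toFun u := WithLp.toLp 2 (fun i => u (τ⁻¹ i))
  map_add' _ _ := rfl
  map_smul' _ _ := rfl

/-- The Cartesian symmetrizer `C_χ = (χ(1)/|G|) Σ_{τ∈G} χ(τ) Q(τ)`. -/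
def cartSym (V : Type*) [NormedAddCommGroup V] [InnerProductSpace ℂ V] (m : ℕ)
    (G : Subgroup (Equiv.Perm (Fin m))) (χ : ↥G → ℂ) :
    CartPow V m →ₗ[ℂ] CartPow V m :=
  (χ 1 / (Nat.card G : ℂ)) • ∑ τ : G, χ τ • CartQ V m (τ : Equiv.Perm (Fin m))

/-- `χ : H → ℂ` is the character of some irreducible (finite-dimensional, complex)
representation of `H`. -/
def IsIrredChar {H : Type} [Group H] (χ : H → ℂ) : Prop :=
  ∃ W : FDRep ℂ H, CategoryTheory.Simple W ∧ χ = W.character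

/-- The standard vectors `f_{ij} = (δ_{1j} f_i, …, δ_{mj} f_i)` in `×^m V`. -/
def stdVec {V : Type*} [NormedAddCommGroup V] [InnerProductSpace ℂ V] {n : ℕ}
    (f : Fin n → V) (m : ℕ) (i : Fin n) (j : Fin m) : CartPow V m :=
  WithLp.toLp 2 (fun l => if l = j then f i else 0)

/-- `[χ, 1_{G_j}] = (1/|G_j|) Σ_{g ∈ G_j} χ(g)`. -/
def charInnerTriv {m : ℕ} (G : Subgroup (Equiv.Perm (Fin m))) (χ : ↥G → ℂ)
    (j : Fin m) : ℂ :=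
  (Nat.card (MulAction.stabilizer G j) : ℂ)⁻¹ * ∑ g : MulAction.stabilizer G j, χ (g : ↥G)

/-- `V^χ(G)` has an orthogonal basis consisting of standard χ-symmetrized vectors. -/
def HasOBasis (V : Type*) [NormedAddCommGroup V] [InnerProductSpace ℂ V] {n m : ℕ}
    (f : Fin n → V) (G : Subgroup (Equiv.Perm (Fin m))) (χ : ↥G → ℂ) : Prop :=
  ∃ (k : ℕ) (b : Module.Basis (Fin k) ℂ (LinearMap.range (cartSym V m G χ))),
    (∀ p q : Fin k, p ≠ q → ⟪(b p : CartPow V m), (b q : CartPow V m)⟫_ℂ = 0) ∧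
    ∀ p, ∃ (r : Fin n) (j : Fin m), (b p : CartPow V m) = cartSym V m G χ (stdVec f m r j)

/-- The Ramanujan sum `c_n(q)`. -/
def ramanujanSum (n q : ℕ) : ℂ :=
  ∑ s ∈ (Finset.range n).filter (fun s => Nat.gcd s n = 1),
    Complex.exp (2 * Real.pi * Complex.I * q * s / n)

end

/-
A linear character is multiplicative, since the trace is multiplicative on a one-dimensional
space. Reindexing `τ ↦ τσ` in the symmetrizer then gives `C_λ Q(σ) = λ(σ⁻¹) C_λ`, and as
`Q(σ) f_{ij} = f_{iσ(j)}` every `f^λ_{iσ(j)}` is a multiple of `f^λ_{ij}`. The latter is nonzero: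
its `j`-th coordinate is `|G|⁻¹ Σ_{g ∈ G_j} λ(g) f_i = (|G_j| / |G|) [λ, 1_{G_j}] f_i`.
-/

universe u

theorem LinearMap.trace_mul_of_finrank_eq_one {K M : Type*} [Field K] [AddCommGroup M]
    [Module K M] (h : Module.finrank K M = 1) (f g : M →ₗ[K] M) :
    LinearMap.trace K M (f * g) = LinearMap.trace K M f * LinearMap.trace K M g := by
  have : Module.Finite K M := Module.finite_of_finrank_pos (by omega)
  obtain ⟨a, rfl, -⟩ := f.existsUnique_eq_smul_id_of_finrank_eq_one h
  obtain ⟨b, rfl, -⟩ := g.existsUnique_eq_smul_id_of_finrank_eq_one h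
  simp [Module.End.mul_eq_comp, h, mul_comm]

theorem FDRep.character_mul_of_finrank_eq_one {k G : Type u} [Field k] [Group G]
    (W : FDRep k G) (h : Module.finrank k W = 1) (a b : G) :
    W.character (a * b) = W.character a * W.character b := by
  simp only [FDRep.character, map_mul]
  exact LinearMap.trace_mul_of_finrank_eq_one h _ _

theorem Submodule.span_range_smul_eq_span_singleton {K M ι : Type*} [DivisionRing K]
    [AddCommGroup M] [Module K M] (c : ι → K) (v : M) (hc : ∃ i, c i ≠ 0) :
    Submodule.span K (Set.range fun i => c i • v) = K ∙ v := by
  obtain ⟨i, hi⟩ := hc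
  apply le_antisymm
  · rw [Submodule.span_le]
    rintro _ ⟨l, rfl⟩
    exact Submodule.smul_mem _ _ (Submodule.mem_span_singleton_self v)
  · rw [Submodule.span_singleton_le_iff_mem]
    have hci : c i • v ∈ Submodule.span K (Set.range fun i => c i • v) :=
      Submodule.subset_span (Set.mem_range_self i)
    simpa [hi] using Submodule.smul_mem _ (c i)⁻¹ hci

section CartesianSymmetrizer

variable {V : Type*} [NormedAddCommGroup V] [InnerProductSpace ℂ V] {n m : ℕ}
  (G : Subgroup (Equiv.Perm (Fin m)))

theorem cartQ_mul (τ σ : Equiv.Perm (Fin m)) (u : CartPow V m) :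
    CartQ V m (τ * σ) u = CartQ V m τ (CartQ V m σ u) :=
  rfl

theorem cartQ_stdVec (f : Fin n → V) (i : Fin n) (τ : Equiv.Perm (Fin m)) (l : Fin m) :
    CartQ V m τ (stdVec f m i l) = stdVec f m i (τ l) := by
  ext x
  simp [CartQ, stdVec, Equiv.Perm.inv_def, Equiv.symm_apply_eq]

theorem cartSym_apply (χ : ↥G → ℂ) (u : CartPow V m) (l : Fin m) :
    cartSym V m G χ u l =
      (χ 1 / Nat.card G) • ∑ τ : ↥G, χ τ • u ((τ : Equiv.Perm (Fin m))⁻¹ l) := by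
  simp [cartSym, CartQ]

theorem cartSym_cartQ (χ : ↥G →* ℂ) (σ : ↥G) (u : CartPow V m) :
    cartSym V m G χ (CartQ V m σ u) = χ σ⁻¹ • cartSym V m G χ u := by
  have reindex : ∑ τ : ↥G, χ τ • CartQ V m τ (CartQ V m σ u) =
      ∑ τ : ↥G, χ σ⁻¹ • χ τ • CartQ V m τ u :=
    Fintype.sum_equiv (Equiv.mulRight σ) _ _ fun τ => by
      have hχ : χ σ⁻¹ * χ (τ * σ) = χ τ := by
        rw [map_mul, mul_left_comm, ← map_mul, inv_mul_cancel, map_one, mul_one]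
      rw [smul_smul, Equiv.coe_mulRight, hχ, Subgroup.coe_mul, cartQ_mul]
  simp only [cartSym, LinearMap.smul_apply, LinearMap.coe_sum, Finset.sum_apply, reindex]
  rw [← Finset.smul_sum, smul_comm]

theorem cartSym_stdVec_smul (χ : ↥G →* ℂ) (f : Fin n → V) (i : Fin n) (j : Fin m) (σ : ↥G) :
    cartSym V m G χ (stdVec f m i (σ • j)) = χ σ⁻¹ • cartSym V m G χ (stdVec f m i j) := by
  rw [← cartSym_cartQ, cartQ_stdVec]
  rfl

theorem cartSym_stdVec_apply_self (f : Fin n → V) (χ : ↥G → ℂ) (i : Fin n) (j : Fin m) :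
    cartSym V m G χ (stdVec f m i j) j =
      (χ 1 / Nat.card G * ∑ g : MulAction.stabilizer G j, χ g) • f i := by
  have hstab : ∀ τ : ↥G, (τ : Equiv.Perm (Fin m))⁻¹ j = j ↔ τ ∈ MulAction.stabilizer G j := by
    intro τ
    rw [MulAction.mem_stabilizer_iff, Equiv.Perm.inv_eq_iff_eq, eq_comm]
    rfl
  simp only [cartSym_apply, stdVec, hstab, smul_ite, smul_zero, ← Finset.sum_filter,
    ← Finset.sum_smul, mul_smul]
  rw [Finset.sum_subtype (p := (· ∈ MulAction.stabilizer G j)) _ (fun _ => by simp)]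

theorem cartSym_stdVec_ne_zero {f : Fin n → V} {χ : ↥G → ℂ} {i : Fin n} {j : Fin m}
    (hχ : χ 1 ≠ 0) (hf : f i ≠ 0) (hj : charInnerTriv G χ j ≠ 0) :
    cartSym V m G χ (stdVec f m i j) ≠ 0 := by
  have hsum : ∑ g : MulAction.stabilizer G j, χ g ≠ 0 := right_ne_zero_of_mul hj
  intro h
  have hcoord := cartSym_stdVec_apply_self G f χ i j
  rw [h, eq_comm] at hcoord
  simp [hχ, hf, hsum] at hcoord

end CartesianSymmetrizer

theorem cyclic_subspace_of_linear_character_general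
    (V : Type*) [NormedAddCommGroup V] [InnerProductSpace ℂ V]
    {n m : ℕ} (f : OrthonormalBasis (Fin n) ℂ V)
    (G : Subgroup (Equiv.Perm (Fin m))) (χ : ↥G → ℂ)
    (hχ : IsIrredChar χ) (hlin : χ 1 = 1)
    (i : Fin n) (j : Fin m) (hj : charInnerTriv G χ j ≠ 0) :
    (∀ σ : ↥G, cartSym V m G χ (stdVec ⇑f m i (σ • j)) =
        χ σ⁻¹ • cartSym V m G χ (stdVec ⇑f m i j)) ∧
    Module.finrank ℂ (Submodule.span ℂ
      (Set.range fun σ : ↥G => cartSym V m G χ (stdVec ⇑f m i (σ • j)))) = 1 := by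
  have hmul : ∀ a b : ↥G, χ (a * b) = χ a * χ b := by
    obtain ⟨W, -, rfl⟩ := hχ
    exact W.character_mul_of_finrank_eq_one (by exact_mod_cast W.char_one.symm.trans hlin)
  have hshift : ∀ σ : ↥G, cartSym V m G χ (stdVec ⇑f m i (σ • j)) =
      χ σ⁻¹ • cartSym V m G χ (stdVec ⇑f m i j) :=
    cartSym_stdVec_smul G ⟨⟨χ, hlin⟩, hmul⟩ f i j
  refine ⟨hshift, ?_⟩
  rw [funext hshift, Submodule.span_range_smul_eq_span_singleton _ _ ⟨1, by simp [hlin]⟩,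
    finrank_span_singleton (cartSym_stdVec_ne_zero G (by simp [hlin]) (f.orthonormal.ne_zero i) hj)]

/-- for a linear character `χ` and `j` with `[χ, 1_{G_j}] ≠ 0`,
`f^χ_{iσ(j)} = χ(σ⁻¹)·f^χ_{ij}` for all `σ ∈ G`, so the cyclic subspace
`V^χ_{ij}` is one-dimensional. -/
theorem cyclic_subspace_of_linear_character
    (V : Type*) [NormedAddCommGroup V] [InnerProductSpace ℂ V] [FiniteDimensional ℂ V]
    {n m : ℕ} (f : OrthonormalBasis (Fin n) ℂ V)
    (G : Subgroup (Equiv.Perm (Fin m))) (χ : ↥G → ℂ)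
    (hχ : IsIrredChar χ) (hlin : χ 1 = 1)
    (i : Fin n) (j : Fin m) (hj : charInnerTriv G χ j ≠ 0) :
    (∀ σ : ↥G, cartSym V m G χ (stdVec ⇑f m i (σ • j)) =
        χ σ⁻¹ • cartSym V m G χ (stdVec ⇑f m i j)) ∧
    Module.finrank ℂ (Submodule.span ℂ
      (Set.range fun σ : ↥G => cartSym V m G χ (stdVec ⇑f m i (σ • j)))) = 1 :=
  cyclic_subspace_of_linear_character_general V f G χ hχ hlin i j hj
end

section
/- Let G = D_{2m} ≤ S_m (m ≥ 3) be the dihedral group generated by r = (1 2 ⋯ m) and the reflection s fixing 1. For any λ ∈ Irr(G), dim V^λ(G) = (dim V)·(λ(1)/2)·(λ(1) + λ(s)). -/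
open scoped Classical InnerProductSpace ComplexConjugate

/-- The dihedral group `D_{2m} ≤ S_m`, generated by the `m`-cycle `r` and the
reflection `s = (x ↦ -x)` fixing the first point. -/
def dihedralG (m : ℕ) [NeZero m] : Subgroup (Equiv.Perm (Fin m)) :=
  Subgroup.closure {finRotate m, (Equiv.neg (Fin m) : Equiv.Perm (Fin m))}

/-- The reflection `s` as an element of `D_{2m}`. -/
def sElt (m : ℕ) [NeZero m] : ↥(dihedralG m) :=
  ⟨(Equiv.neg (Fin m) : Equiv.Perm (Fin m)), Subgroup.subset_closure (by simp)⟩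

/-! The operator `C_χ` is the image of the element `(χ(1)/|G|) χ` of the group algebra, which is
idempotent by the orthogonality relation `χ(1) Σ_h χ(h) χ(h⁻¹g) = |G| χ(g)` (Schur's lemma). Hence
`dim V^χ(G) = tr C_χ`. Since `Q(τ)` permutes the `m` copies of `V`, `tr Q(τ) = dim V · #Fix(τ)`, and
exchanging the sums gives `tr C_χ = (χ(1)/|G|) dim V Σ_j Σ_{τ ∈ G_j} χ(τ)`. For transitive `G` the
stabilizers `G_j` are conjugate and `m |G_j| = |G|`, so `dim V^χ(G) = dim V · χ(1) · [χ, 1_{G_j}]`.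
In `D_{2m}` every element is `x ↦ k ± x`, so the stabilizer of a point is `{1, s}`. -/

open CategoryTheory

namespace FDRep

variable {k H : Type*} [Field k] [IsAlgClosed k] [Group H] [Fintype H]
  [Invertible (Nat.card H : k)]

lemma character_one_smul_sum_character_inv_smul (W : FDRep k H) [Simple W] :
    W.character 1 • ∑ h, W.character h⁻¹ • W.ρ h = (Nat.card H : k) • (1 : Module.End k W) := by
  set B : Module.End k W := ∑ h, W.character h⁻¹ • W.ρ h
  -- `B` commutes with `ρ`, so it is a scalar `c` by Schur's lemma; its trace `c χ(1)` is `|H|`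
  -- by orthonormality of `χ`.
  have hcomm : ∀ g, W.ρ g * B = B * W.ρ g := by
    intro g
    simp only [B, Finset.mul_sum, Finset.sum_mul, mul_smul_comm, smul_mul_assoc, ← map_mul]
    refine (Fintype.sum_equiv (MulAut.conj g⁻¹).toEquiv _ _ fun h => ?_).symm
    have hconj := W.char_conj h⁻¹ g⁻¹
    rw [inv_inv, mul_assoc] at hconj
    simp [mul_assoc, hconj]
  let f : W ⟶ W := ⟨FGModuleCat.ofHom B, fun g => by
    ext x; exact (LinearMap.congr_fun (hcomm g) x).symm⟩
  obtain ⟨c, hc⟩ := endomorphism_simple_eq_smul_id k f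
  have hB : B = c • 1 := (congrArg (fun φ => φ.hom.hom.hom) hc).symm
  have htrace : c * W.character 1 = Nat.card H := by
    have horth := W.char_orthonormal W
    rw [if_pos ⟨Iso.refl W⟩, inv_mul_eq_iff_eq_mul₀ (Invertible.ne_zero _),
      mul_one] at horth
    calc c * W.character 1 = LinearMap.trace k W B := by
          rw [hB, map_smul, smul_eq_mul, FDRep.char_one, LinearMap.trace_one]
      _ = ∑ h, W.character h * W.character h⁻¹ := by
          simp only [B, map_sum, map_smul, smul_eq_mul, mul_comm (W.character _⁻¹)]; rfl
      _ = Nat.card H := horth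
  rw [hB, smul_smul, mul_comm, htrace]

lemma character_one_mul_sum_character_mul_character (W : FDRep k H) [Simple W] (g : H) :
    W.character 1 * ∑ h, W.character h * W.character (h⁻¹ * g) =
      Nat.card H * W.character g := by
  have := congrArg (fun f => LinearMap.trace k W (f * W.ρ g))
    (character_one_smul_sum_character_inv_smul W)
  simp only [smul_mul_assoc, Finset.sum_mul, one_mul, ← map_mul, map_smul, map_sum,
    smul_eq_mul] at this
  rw [← Fintype.sum_equiv (Equiv.inv H) (fun h => W.character h⁻¹ * W.character (h * g))]
  · exact this
  · simp

end FDRep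

lemma isIdempotentElem_smul_sum_smul {k G A : Type*} [CommSemiring k] [Group G] [Fintype G]
    [Semiring A] [Algebra k A] (Q : G →* A) (χ : G → k) (c : k)
    (hχ : ∀ g, c * ∑ h, χ h * χ (h⁻¹ * g) = χ g) :
    IsIdempotentElem (c • ∑ g, χ g • Q g) := by
  have hsq : (∑ g, χ g • Q g) * ∑ g, χ g • Q g = ∑ g, (∑ h, χ h * χ (h⁻¹ * g)) • Q g :=
    calc (∑ g, χ g • Q g) * ∑ g, χ g • Q g = ∑ h, ∑ g, (χ h * χ g) • Q (h * g) := by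
          simp only [Finset.sum_mul, Finset.mul_sum, smul_mul_smul_comm, map_mul]
          exact Finset.sum_comm
      _ = ∑ h, ∑ g, (χ h * χ (h⁻¹ * g)) • Q g := Finset.sum_congr rfl fun h _ =>
          Fintype.sum_equiv (Equiv.mulLeft h) _ _ fun g => by simp
      _ = ∑ g, (∑ h, χ h * χ (h⁻¹ * g)) • Q g := by
          simp only [Finset.sum_smul]; exact Finset.sum_comm
  rw [IsIdempotentElem, smul_mul_smul_comm, hsq, mul_smul, Finset.smul_sum]
  simp only [smul_smul, hχ]

lemma LinearMap.trace_funLeft_perm {R M ι : Type*} [CommRing R] [AddCommGroup M] [Module R M]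
    [Module.Free R M] [Module.Finite R M] [Fintype ι] [DecidableEq ι] (σ : Equiv.Perm ι) :
    trace R (ι → M) (funLeft R M σ) =
      (Finset.univ.filter fun i => σ i = i).card * Module.finrank R M := by
  have hsum : funLeft R M σ = ∑ i, single R (fun _ => M) i ∘ₗ proj (σ i) := by
    ext f i
    simp [funLeft_apply, Pi.single_apply]
  rw [hsum, map_sum, Finset.natCast_card_filter, Finset.sum_mul]
  refine Finset.sum_congr rfl fun i _ => ?_
  rw [trace_comp_comm', proj_comp_single]
  split_ifs with h <;> simp [h, diag]

lemma MulAction.sum_filter_smul_eq_self_smul {G α M : Type*} [Group G] [Fintype G]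
    [MulAction G α] [DecidableEq α] [AddCommMonoid M] (f : G → M) (hf : ∀ g h, f (h * g * h⁻¹) = f g) (h : G) (a : α) :
    ∑ g ∈ Finset.univ.filter (fun g : G => g • h • a = h • a), f g =
      ∑ g ∈ Finset.univ.filter (fun g : G => g • a = a), f g := by
  refine (Finset.sum_equiv (MulAut.conj h).toEquiv (fun g => ?_) fun g _ => (hf g h).symm).symm
  simp [mul_smul, smul_left_cancel_iff]

lemma MulAction.sum_sum_filter_smul_eq_self {G α M : Type*} [Group G] [Fintype G]
    [MulAction G α] [Fintype α] [DecidableEq α] [MulAction.IsPretransitive G α] [AddCommMonoid M] (f : G → M)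
    (hf : ∀ g h, f (h * g * h⁻¹) = f g) (a : α) :
    ∑ b : α, ∑ g ∈ Finset.univ.filter (fun g : G => g • b = b), f g =
      Fintype.card α • ∑ g ∈ Finset.univ.filter (fun g : G => g • a = a), f g := by
  rw [← Finset.card_univ, ← Finset.sum_const]
  refine Finset.sum_congr rfl fun b _ => ?_
  obtain ⟨h, rfl⟩ := MulAction.exists_smul_eq G a b
  exact MulAction.sum_filter_smul_eq_self_smul f hf h a

lemma MulAction.card_stabilizer_eq_card_filter (G : Type*) {α : Type*} [Group G] [Fintype G]
    [MulAction G α] [DecidableEq α] (a : α) :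
    Nat.card (MulAction.stabilizer G a) = (Finset.univ.filter fun g : G => g • a = a).card := by
  rw [Nat.card_eq_fintype_card, Fintype.card_subtype]
  simp [MulAction.mem_stabilizer_iff]

section CartesianSymmetrizer

variable (V : Type*) [NormedAddCommGroup V] [InnerProductSpace ℂ V] {m : ℕ}

variable (m) in
def cartQHom : Equiv.Perm (Fin m) →* Module.End ℂ (CartPow V m) where
  toFun := CartQ V m
  map_one' := rfl
  map_mul' _ _ := rfl

lemma isIdempotentElem_cartSym (G : Subgroup (Equiv.Perm (Fin m))) (χ : G → ℂ)
    (hχ : IsIrredChar χ) : IsIdempotentElem (cartSym V m G χ) := by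
  obtain ⟨W, hW, rfl⟩ := hχ
  have hG : (Nat.card G : ℂ) ≠ 0 := Nat.cast_ne_zero.mpr Nat.card_pos.ne'
  have : Invertible (Nat.card G : ℂ) := invertibleOfNonzero hG
  refine isIdempotentElem_smul_sum_smul ((cartQHom V m).comp G.subtype) _ _ fun g => ?_
  rw [div_mul_eq_mul_div, W.character_one_mul_sum_character_mul_character,
    mul_div_cancel_left₀ _ hG]

variable [FiniteDimensional ℂ V]

lemma trace_cartQ (τ : Equiv.Perm (Fin m)) :
    LinearMap.trace ℂ (CartPow V m) (CartQ V m τ) =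
      (Finset.univ.filter fun j => τ j = j).card * Module.finrank ℂ V := by
  have hconj : CartQ V m τ =
      (WithLp.linearEquiv 2 ℂ (Fin m → V)).symm.conj (LinearMap.funLeft ℂ V ⇑τ⁻¹) := rfl
  rw [hconj, LinearMap.trace_conj', LinearMap.trace_funLeft_perm]
  congr 3
  ext j
  simpa only [Finset.mem_filter, Finset.mem_univ, true_and] using
    Equiv.Perm.inv_eq_iff_eq.trans eq_comm

lemma trace_cartSym (G : Subgroup (Equiv.Perm (Fin m))) (χ : G → ℂ) :
    LinearMap.trace ℂ (CartPow V m) (cartSym V m G χ) = χ 1 / Nat.card G * Module.finrank ℂ V *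
      ∑ j : Fin m, ∑ g ∈ Finset.univ.filter (fun g : G => g • j = j), χ g := by
  simp only [cartSym, map_smul, map_sum, trace_cartQ, smul_eq_mul, Finset.natCast_card_filter,
    Finset.sum_filter, Finset.sum_mul, Finset.mul_sum]
  rw [Finset.sum_comm]
  refine Finset.sum_congr rfl fun j _ => Finset.sum_congr rfl fun g _ => ?_
  rw [Subgroup.smul_def, Equiv.Perm.smul_def]
  split_ifs <;> ring

omit [FiniteDimensional ℂ V] in
lemma charInnerTriv_eq_sum_filter (G : Subgroup (Equiv.Perm (Fin m))) (χ : G → ℂ)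
    (j : Fin m) : charInnerTriv G χ j =
      ((Finset.univ.filter fun g : G => g • j = j).card : ℂ)⁻¹ *
        ∑ g ∈ Finset.univ.filter (fun g : G => g • j = j), χ g := by
  rw [charInnerTriv, MulAction.card_stabilizer_eq_card_filter,
    Finset.sum_subtype (p := (· ∈ MulAction.stabilizer G j)) _ (fun g => by simp) χ]

theorem finrank_range_cartSym_of_isPretransitive (G : Subgroup (Equiv.Perm (Fin m)))
    [MulAction.IsPretransitive G (Fin m)] (χ : G → ℂ) (hχ : IsIrredChar χ) (j : Fin m) :
    (Module.finrank ℂ (LinearMap.range (cartSym V m G χ)) : ℂ) =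
      Module.finrank ℂ V * χ 1 * charInnerTriv G χ j := by
  rw [← (LinearMap.IsIdempotentElem.isProj_range _ (isIdempotentElem_cartSym V G χ hχ)).trace,
    trace_cartSym]
  obtain ⟨W, -, rfl⟩ := hχ
  have hcard : m * (Finset.univ.filter fun g : G => g • j = j).card = Nat.card G := by
    rw [← MulAction.card_stabilizer_eq_card_filter, ← (MulAction.stabilizer G j).index_mul_card,
      MulAction.index_stabilizer_of_transitive, Nat.card_fin]
  have hm : (m : ℂ) ≠ 0 := Nat.cast_ne_zero.mpr j.pos.ne'
  have hstab : ((Finset.univ.filter fun g : G => g • j = j).card : ℂ) ≠ 0 :=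
    Nat.cast_ne_zero.mpr (Finset.card_ne_zero_of_mem (by simp : (1 : G) ∈ _))
  rw [MulAction.sum_sum_filter_smul_eq_self _ W.char_conj j, Fintype.card_fin, nsmul_eq_mul,
    charInnerTriv_eq_sum_filter, ← hcard, Nat.cast_mul]
  field_simp

end CartesianSymmetrizer

section Dihedral

variable {m : ℕ} [NeZero m]

def dihedralPerm (k : Fin m) (ε : Bool) : Equiv.Perm (Fin m) :=
  (if ε then Equiv.neg (Fin m) else Equiv.refl (Fin m)).trans (Equiv.addLeft k)

@[simp]
lemma dihedralPerm_apply (k : Fin m) (ε : Bool) (x : Fin m) :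
    dihedralPerm k ε x = k + if ε then -x else x := by
  cases ε <;> simp [dihedralPerm]

lemma dihedralPerm_mul (k k' : Fin m) (ε ε' : Bool) :
    dihedralPerm k ε * dihedralPerm k' ε' =
      dihedralPerm (k + if ε then -k' else k') (xor ε ε') := by
  refine Equiv.ext fun x => ?_
  cases ε <;> cases ε' <;> simp [Equiv.Perm.mul_apply] <;> abel

lemma dihedralPerm_zero_false : dihedralPerm (0 : Fin m) false = 1 :=
  Equiv.ext fun x => by simp

lemma dihedralPerm_inv (k : Fin m) (ε : Bool) :
    (dihedralPerm k ε)⁻¹ = dihedralPerm (if ε then k else -k) ε := by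
  refine inv_eq_of_mul_eq_one_right ?_
  cases ε <;> simp [dihedralPerm_mul, dihedralPerm_zero_false]

lemma exists_dihedralPerm_of_mem_dihedralG {σ : Equiv.Perm (Fin m)} (hσ : σ ∈ dihedralG m) :
    ∃ k ε, σ = dihedralPerm k ε := by
  induction hσ using Subgroup.closure_induction with
  | mem σ hσ =>
    rcases hσ with rfl | rfl
    · exact ⟨1, false, Equiv.ext fun x => by simp [finRotate_apply, add_comm]⟩
    · exact ⟨0, true, Equiv.ext fun x => by simp⟩
  | one => exact ⟨0, false, dihedralPerm_zero_false.symm⟩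
  | mul σ τ _ _ hσ hτ =>
    obtain ⟨k, ε, rfl⟩ := hσ
    obtain ⟨k', ε', rfl⟩ := hτ
    exact ⟨_, _, dihedralPerm_mul k k' ε ε'⟩
  | inv σ _ hσ =>
    obtain ⟨k, ε, rfl⟩ := hσ
    exact ⟨_, _, dihedralPerm_inv k ε⟩

lemma isPretransitive_dihedralG (hm : 2 ≤ m) :
    MulAction.IsPretransitive (dihedralG m) (Fin m) := by
  have hr : finRotate m ∈ dihedralG m := Subgroup.subset_closure (by simp)
  refine ⟨fun x y => ?_⟩
  have hsupp := support_finRotate_of_le hm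
  obtain ⟨i, hi⟩ := (isCycle_finRotate_of_le hm).exists_pow_eq
    (Equiv.Perm.mem_support.mp (hsupp ▸ Finset.mem_univ x))
    (Equiv.Perm.mem_support.mp (hsupp ▸ Finset.mem_univ y))
  exact ⟨⟨_, pow_mem hr i⟩, hi⟩

lemma sElt_ne_one (hm : 3 ≤ m) : sElt m ≠ 1 := by
  intro h
  have : Fact (2 < m) := ⟨hm⟩
  have hneg : (-1 : Fin m) = 1 := congrArg (fun g : dihedralG m => (g : Equiv.Perm (Fin m)) 1) h
  exact (open Fin.CommRing in CharP.neg_one_ne_one (Fin m) m) hneg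

lemma filter_smul_zero_eq_dihedralG :
    Finset.univ.filter (fun g : dihedralG m => g • (0 : Fin m) = 0) = {1, sElt m} := by
  ext ⟨σ, hσ⟩
  simp only [Finset.mem_filter, Finset.mem_univ, true_and, Finset.mem_insert,
    Finset.mem_singleton, Subgroup.smul_def, Equiv.Perm.smul_def]
  constructor
  · intro h0
    obtain ⟨k, ε, rfl⟩ := exists_dihedralPerm_of_mem_dihedralG hσ
    obtain rfl : k = 0 := by simpa using h0
    cases ε
    · exact Or.inl (Subtype.ext dihedralPerm_zero_false)
    · exact Or.inr (Subtype.ext (Equiv.ext fun x => by simp [sElt]))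
  · rintro (h | h) <;> obtain rfl := congrArg Subtype.val h <;> simp [sElt]

lemma charInnerTriv_dihedralG (hm : 3 ≤ m) (χ : dihedralG m → ℂ) :
    charInnerTriv (dihedralG m) χ 0 = (χ 1 + χ (sElt m)) / 2 := by
  rw [charInnerTriv_eq_sum_filter, filter_smul_zero_eq_dihedralG,
    Finset.card_pair (sElt_ne_one hm).symm, Finset.sum_pair (sElt_ne_one hm).symm]
  ring

end Dihedral

/-- for the dihedral group `G = D_{2m} ≤ S_m` (`m ≥ 3`) and any
`λ ∈ Irr(G)`, `dim V^λ(G) = (dim V)·(λ(1)/2)·(λ(1) + λ(s))`. -/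
theorem finrank_cartSymClass_dihedral
    (V : Type*) [NormedAddCommGroup V] [InnerProductSpace ℂ V] [FiniteDimensional ℂ V]
    (m : ℕ) [NeZero m] (hm : 3 ≤ m)
    (χ : ↥(dihedralG m) → ℂ) (hχ : IsIrredChar χ) :
    (Module.finrank ℂ (LinearMap.range (cartSym V m (dihedralG m) χ)) : ℂ) =
      (Module.finrank ℂ V : ℂ) * (χ 1 / 2) * (χ 1 + χ (sElt m)) := by
  have := isPretransitive_dihedralG (m := m) (by omega)
  rw [finrank_range_cartSym_of_isPretransitive V (dihedralG m) χ hχ 0,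
    charInnerTriv_dihedralG hm]
  ring
end

section
/- For G = D_8 ≤ S_4 and its unique non-linear irreducible character ψ (ψ(r^k) = 2cos(kπ/2), ψ(sr^k) = 0), one has ‖f^ψ_{ij}‖ = √2/2 for all valid i, j, and V^ψ(G) has an O-basis; hence √2/2 is the optimal lower bound in the non-existence criterion. -/
open scoped Classical InnerProductSpace ComplexConjugate

/-! The character `ψ` vanishes outside `{1, r²}`, where it takes the values `2` and `-2`, so
`C_ψ = (Q(1) - Q(r²)) / 4` and `f^ψ_{ij} = (f_{ij} - f_{i,j+2}) / 2`. As the `f_{ij}` are orthonormal,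
every `f^ψ_{ij}` has norm `√2/2`, the `f^ψ_{ij}` with `j ∈ {0, 1}` are pairwise orthogonal, and those
with `j ∈ {2, 3}` are their negatives; hence the former are an orthogonal basis of `V^ψ(G)`. -/

theorem Orthonormal.norm_sub_of_ne {𝕜 E ι : Type*} [RCLike 𝕜] [NormedAddCommGroup E]
    [InnerProductSpace 𝕜 E] {e : ι → E} (he : Orthonormal 𝕜 e) {a b : ι} (hab : a ≠ b) :
    ‖e a - e b‖ = √2 := by
  rw [← Real.sqrt_sq (norm_nonneg _), @norm_sub_sq 𝕜, he.inner_eq_zero hab, he.1 a, he.1 b]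
  norm_num

theorem Orthonormal.inner_sub_sub_eq_zero {𝕜 E ι : Type*} [RCLike 𝕜] [NormedAddCommGroup E]
    [InnerProductSpace 𝕜 E] {e : ι → E} (he : Orthonormal 𝕜 e) {a a' b b' : ι}
    (h₁ : a ≠ b) (h₂ : a ≠ b') (h₃ : a' ≠ b) (h₄ : a' ≠ b') :
    ⟪e a - e a', e b - e b'⟫_𝕜 = 0 := by
  simp [inner_sub_left, inner_sub_right, he.inner_eq_zero, *]

section CartesianPower

variable {V : Type*} [NormedAddCommGroup V] [InnerProductSpace ℂ V] {n m : ℕ}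

theorem stdVec_eq_single (f : Fin n → V) (i : Fin n) (j : Fin m) :
    stdVec f m i j = PiLp.single 2 j (f i) := by
  ext l
  simp [stdVec, PiLp.single_apply]

theorem CartQ_stdVec (f : Fin n → V) (τ : Equiv.Perm (Fin m)) (i : Fin n) (j : Fin m) :
    CartQ V m τ (stdVec f m i j) = stdVec f m i (τ j) := by
  ext l
  simp [CartQ, stdVec, Equiv.symm_apply_eq]

theorem cartSym_stdVec (G : Subgroup (Equiv.Perm (Fin m))) (χ : G → ℂ) (f : Fin n → V)
    (i : Fin n) (j : Fin m) :
    cartSym V m G χ (stdVec f m i j) =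
      (χ 1 / Nat.card G) • ∑ τ : G, χ τ • stdVec f m i ((τ : Equiv.Perm (Fin m)) j) := by
  simp [cartSym, CartQ_stdVec]

noncomputable def cartStdBasis (f : OrthonormalBasis (Fin n) ℂ V) (m : ℕ) :
    OrthonormalBasis (Fin n × Fin m) ℂ (CartPow V m) :=
  (Pi.orthonormalBasis fun _ => f).reindex
    ((Equiv.sigmaEquivProd _ _).trans (Equiv.prodComm _ _))

@[simp]
theorem cartStdBasis_apply (f : OrthonormalBasis (Fin n) ℂ V) (p : Fin n × Fin m) :
    cartStdBasis f m p = stdVec f m p.1 p.2 := by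
  simp [cartStdBasis, stdVec_eq_single]

theorem range_eq_span_stdVec (f : OrthonormalBasis (Fin n) ℂ V)
    (C : CartPow V m →ₗ[ℂ] CartPow V m) :
    LinearMap.range C =
      Submodule.span ℂ (Set.range fun p : Fin n × Fin m => C (stdVec f m p.1 p.2)) := by
  rw [LinearMap.range_eq_map, ← (cartStdBasis f m).toBasis.span_eq, Submodule.map_span,
    ← Set.range_comp]
  simp [Function.comp_def]

theorem hasOBasis_of_pairwise_inner_eq_zero (f : Fin n → V) (G : Subgroup (Equiv.Perm (Fin m)))
    (χ : G → ℂ) {ι : Type*} [Fintype ι] (v : ι → CartPow V m) (hv : ∀ p, v p ≠ 0)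
    (horth : Pairwise fun p q => ⟪v p, v q⟫_ℂ = 0)
    (hspan : Submodule.span ℂ (Set.range v) = LinearMap.range (cartSym V m G χ))
    (hstd : ∀ p, ∃ (r : Fin n) (j : Fin m), v p = cartSym V m G χ (stdVec f m r j)) :
    HasOBasis V f G χ := by
  let b := ((Module.Basis.span (linearIndependent_of_ne_zero_of_inner_eq_zero hv horth)).map
    (LinearEquiv.ofEq _ _ hspan)).reindex (Fintype.equivFin ι)
  have hb : ∀ p, (b p : CartPow V m) = v ((Fintype.equivFin ι).symm p) := by
    intro p
    simp [b, Module.Basis.span_apply]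
  refine ⟨Fintype.card ι, b, fun p q hpq => ?_, fun p => ?_⟩
  · rw [hb, hb]
    exact horth ((Fintype.equivFin ι).symm.injective.ne hpq)
  · rw [hb]
    exact hstd _

end CartesianPower

section DihedralEight

local notation "ρ" => finRotate 4
local notation "σ" => (Equiv.neg (Fin 4) : Equiv.Perm (Fin 4))

def dihedralFourElems : Finset (Equiv.Perm (Fin 4)) :=
  {1, ρ, ρ ^ 2, ρ ^ 3, σ, σ * ρ, σ * ρ ^ 2, σ * ρ ^ 3}

theorem mem_dihedralG_four {x : Equiv.Perm (Fin 4)} :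
    x ∈ dihedralG 4 ↔ x ∈ dihedralFourElems := by
  constructor
  · intro hx
    induction hx using Subgroup.closure_induction with
    | mem x hx => rcases hx with rfl | rfl <;> decide
    | one => decide
    | mul x y _ _ hx hy =>
      exact (by decide : ∀ p ∈ dihedralFourElems, ∀ q ∈ dihedralFourElems,
        p * q ∈ dihedralFourElems) x hx y hy
    | inv x _ hx =>
      exact (by decide : ∀ p ∈ dihedralFourElems, p⁻¹ ∈ dihedralFourElems) x hx
  · have hρ : ρ ∈ dihedralG 4 := Subgroup.subset_closure (by simp)
    have hσ : σ ∈ dihedralG 4 := Subgroup.subset_closure (by simp)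
    simp only [dihedralFourElems, Finset.mem_insert, Finset.mem_singleton]
    rintro (rfl | rfl | rfl | rfl | rfl | rfl | rfl | rfl)
    exacts [one_mem _, hρ, pow_mem hρ 2, pow_mem hρ 3, hσ, mul_mem hσ hρ, mul_mem hσ (pow_mem hρ 2),
      mul_mem hσ (pow_mem hρ 3)]

theorem card_dihedralG_four : Nat.card (dihedralG 4) = 8 := by
  rw [← SetLike.coe_sort_coe, Set.ext fun _ => mem_dihedralG_four, Nat.card_coe_set_eq,
    Set.ncard_coe_finset]
  decide

def rElt (m : ℕ) [NeZero m] : dihedralG m :=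
  ⟨finRotate m, Subgroup.subset_closure (by simp)⟩

def IsTwoDimCharD8 (ψ : dihedralG 4 → ℂ) : Prop :=
  ∀ (g : dihedralG 4) (k : ℕ),
    ((g : Equiv.Perm (Fin 4)) = ρ ^ k → ψ g = ((2 * Real.cos (k * Real.pi / 2) : ℝ) : ℂ)) ∧
      ((g : Equiv.Perm (Fin 4)) = σ * ρ ^ k → ψ g = 0)

namespace IsTwoDimCharD8

variable {ψ : dihedralG 4 → ℂ} (hψ : IsTwoDimCharD8 ψ)
include hψ

theorem apply_one : ψ 1 = 2 := by
  simpa using (hψ 1 0).1 (pow_zero _).symm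

theorem apply_rElt_sq : ψ (rElt 4 ^ 2) = -2 := by
  rw [(hψ _ 2).1 rfl]
  norm_num

theorem apply_eq_zero {τ : dihedralG 4} (h₁ : τ ≠ 1) (h₂ : τ ≠ rElt 4 ^ 2) : ψ τ = 0 := by
  have hτ := mem_dihedralG_four.1 τ.2
  simp only [dihedralFourElems, Finset.mem_insert, Finset.mem_singleton] at hτ
  rcases hτ with h | h | h | h | h | h | h | h
  · exact absurd (Subtype.ext h) h₁
  · rw [(hψ τ 1).1 (by rw [h, pow_one])]
    norm_num
  · exact absurd (Subtype.ext h) h₂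
  · rw [(hψ τ 3).1 h,
      show ((3 : ℕ) : ℝ) * Real.pi / 2 = Real.pi / 2 + Real.pi by push_cast; ring]
    simp
  · exact (hψ τ 0).2 (by rw [h, pow_zero, mul_one])
  · exact (hψ τ 1).2 (by rw [h, pow_one])
  · exact (hψ τ 2).2 h
  · exact (hψ τ 3).2 h

theorem sum_smul {M : Type*} [AddCommGroup M] [Module ℂ M] (F : Equiv.Perm (Fin 4) → M) :
    ∑ τ : dihedralG 4, ψ τ • F τ = (2 : ℂ) • F 1 - (2 : ℂ) • F (ρ ^ 2) := by
  rw [Fintype.sum_eq_add 1 (rElt 4 ^ 2) (by decide)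
      fun τ hτ => by rw [hψ.apply_eq_zero hτ.1 hτ.2, zero_smul],
    hψ.apply_one, hψ.apply_rElt_sq, neg_smul, ← sub_eq_add_neg]
  rfl

end IsTwoDimCharD8

section SymmetrizedVectors

variable {V : Type*} [NormedAddCommGroup V] [InnerProductSpace ℂ V] {n : ℕ}
  {ψ : dihedralG 4 → ℂ} (hψ : IsTwoDimCharD8 ψ)
include hψ

theorem cartSym_dihedralG_four_stdVec (f : Fin n → V) (i : Fin n) (j : Fin 4) :
    cartSym V 4 (dihedralG 4) ψ (stdVec f 4 i j) =
      (2 : ℂ)⁻¹ • (stdVec f 4 i j - stdVec f 4 i (j + 2)) := by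
  have hρ : (ρ ^ 2) j = j + 2 := by revert j; decide
  rw [cartSym_stdVec, hψ.sum_smul fun τ => stdVec f 4 i (τ j), hψ.apply_one,
    card_dihedralG_four, hρ, Equiv.Perm.one_apply]
  module

theorem cartSym_dihedralG_four_stdVec_add_two (f : Fin n → V) (i : Fin n) (j : Fin 4) :
    cartSym V 4 (dihedralG 4) ψ (stdVec f 4 i (j + 2)) =
      -cartSym V 4 (dihedralG 4) ψ (stdVec f 4 i j) := by
  rw [cartSym_dihedralG_four_stdVec hψ, cartSym_dihedralG_four_stdVec hψ, add_assoc,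
    show (2 + 2 : Fin 4) = 0 from rfl, add_zero, ← smul_neg, neg_sub]

theorem norm_cartSym_dihedralG_four_stdVec (f : OrthonormalBasis (Fin n) ℂ V) (i : Fin n)
    (j : Fin 4) : ‖cartSym V 4 (dihedralG 4) ψ (stdVec f 4 i j)‖ = √2 / 2 := by
  rw [cartSym_dihedralG_four_stdVec hψ, ← cartStdBasis_apply f (i, j),
    ← cartStdBasis_apply f (i, j + 2), norm_smul,
    (cartStdBasis f 4).orthonormal.norm_sub_of_ne (by simp)]
  norm_num
  ring

theorem inner_cartSym_dihedralG_four_stdVec_eq_zero (f : OrthonormalBasis (Fin n) ℂ V)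
    {i i' : Fin n} {j j' : Fin 4} (hj : j.val < 2) (hj' : j'.val < 2) (hne : (i, j) ≠ (i', j')) :
    ⟪cartSym V 4 (dihedralG 4) ψ (stdVec f 4 i j),
      cartSym V 4 (dihedralG 4) ψ (stdVec f 4 i' j')⟫_ℂ = 0 := by
  have hsnd : ∀ k k' : Fin 4, k.val < 2 → k'.val < 2 → k ≠ k' + 2 := by decide
  rw [cartSym_dihedralG_four_stdVec hψ, cartSym_dihedralG_four_stdVec hψ,
    inner_smul_left, inner_smul_right, ← cartStdBasis_apply f (i, j),
    ← cartStdBasis_apply f (i, j + 2), ← cartStdBasis_apply f (i', j'),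
    ← cartStdBasis_apply f (i', j' + 2), (cartStdBasis f 4).orthonormal.inner_sub_sub_eq_zero,
    mul_zero, mul_zero]
  · exact hne
  · exact fun h => hsnd j j' hj hj' (congrArg Prod.snd h)
  · exact fun h => hsnd j' j hj' hj (congrArg Prod.snd h).symm
  · simpa using hne

theorem span_cartSym_dihedralG_four_stdVec_lowerHalf (f : OrthonormalBasis (Fin n) ℂ V) :
    Submodule.span ℂ (Set.range fun p : Fin n × Fin 2 =>
        cartSym V 4 (dihedralG 4) ψ (stdVec f 4 p.1 (Fin.castLE (by norm_num) p.2))) =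
      LinearMap.range (cartSym V 4 (dihedralG 4) ψ) := by
  rw [range_eq_span_stdVec f]
  refine le_antisymm (Submodule.span_mono ?_) (Submodule.span_le.2 ?_)
  · rintro _ ⟨p, rfl⟩
    exact ⟨(p.1, Fin.castLE (by norm_num) p.2), rfl⟩
  · rintro _ ⟨⟨i, j⟩, rfl⟩
    obtain ⟨k, rfl | rfl⟩ : ∃ k : Fin 2, j = Fin.castLE (by norm_num) k ∨
        j = Fin.castLE (by norm_num) k + 2 := by revert j; decide
    · exact Submodule.subset_span ⟨(i, k), rfl⟩
    · simp only [SetLike.mem_coe, cartSym_dihedralG_four_stdVec_add_two hψ]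
      exact neg_mem (Submodule.subset_span ⟨(i, k), rfl⟩)

end SymmetrizedVectors

end DihedralEight

theorem dihedral_eight_OBasis_general
    (V : Type*) [NormedAddCommGroup V] [InnerProductSpace ℂ V]
    {n : ℕ} (f : OrthonormalBasis (Fin n) ℂ V)
    (ψ : ↥(dihedralG 4) → ℂ)
    (hψ : ∀ (g : ↥(dihedralG 4)) (k : ℕ),
      ((g : Equiv.Perm (Fin 4)) = (finRotate 4) ^ k →
        ψ g = ((2 * Real.cos (k * Real.pi / 2) : ℝ) : ℂ)) ∧
      ((g : Equiv.Perm (Fin 4)) =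
          (Equiv.neg (Fin 4) : Equiv.Perm (Fin 4)) * (finRotate 4) ^ k → ψ g = 0)) :
    (∀ (i : Fin n) (j : Fin 4),
      ‖cartSym V 4 (dihedralG 4) ψ (stdVec ⇑f 4 i j)‖ = Real.sqrt 2 / 2) ∧
    HasOBasis V ⇑f (dihedralG 4) ψ := by
  have hψ : IsTwoDimCharD8 ψ := hψ
  refine ⟨norm_cartSym_dihedralG_four_stdVec hψ f, ?_⟩
  refine hasOBasis_of_pairwise_inner_eq_zero f _ ψ _ (fun p => ?_) (fun p q hpq => ?_)
    (span_cartSym_dihedralG_four_stdVec_lowerHalf hψ f) fun p => ⟨_, _, rfl⟩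
  · rw [← norm_ne_zero_iff, norm_cartSym_dihedralG_four_stdVec hψ]
    positivity
  · refine inner_cartSym_dihedralG_four_stdVec_eq_zero hψ f p.2.isLt q.2.isLt ?_
    simpa [Prod.ext_iff, Fin.ext_iff] using hpq

/-- for `G = D₈ ≤ S₄` and its unique non-linear irreducible character
`ψ` (`ψ(r^k) = 2cos(kπ/2)`, `ψ(sr^k) = 0`), one has `‖f^ψ_{ij}‖ = √2/2` for all `i, j`,
and `V^ψ(G)` has an `O`-basis: `√2/2` is the optimal lower bound in the
non-existence criterion. -/
theorem dihedral_eight_OBasis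
    (V : Type*) [NormedAddCommGroup V] [InnerProductSpace ℂ V] [FiniteDimensional ℂ V]
    {n : ℕ} (f : OrthonormalBasis (Fin n) ℂ V) (hn : 2 ≤ n)
    (ψ : ↥(dihedralG 4) → ℂ)
    (hψ : ∀ (g : ↥(dihedralG 4)) (k : ℕ),
      ((g : Equiv.Perm (Fin 4)) = (finRotate 4) ^ k →
        ψ g = ((2 * Real.cos (k * Real.pi / 2) : ℝ) : ℂ)) ∧
      ((g : Equiv.Perm (Fin 4)) =
          (Equiv.neg (Fin 4) : Equiv.Perm (Fin 4)) * (finRotate 4) ^ k → ψ g = 0)) :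
    (∀ (i : Fin n) (j : Fin 4),
      ‖cartSym V 4 (dihedralG 4) ψ (stdVec ⇑f 4 i j)‖ = Real.sqrt 2 / 2) ∧
    HasOBasis V ⇑f (dihedralG 4) ψ :=
  dihedral_eight_OBasis_general V f ψ hψ
end
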